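/- Non-flabbiness of the Colombeau sheaf (representative-level statement): there is no net (g_ε)_ε of smooth functions on ℝ that is moderate on ℝ and satisfies that (g_ε(x) − ε^{−1/x})_ε is negligible on (0, ∞). More precisely, if (g_ε)_ε is a net of smooth functions on ℝ with sup_{x ∈ [0,1]} |g_ε(x)| = O(ε^{−N}) for some N ∈ ℕ, then the net (g_ε(x) − ε^{−1/x})_ε restricted to (0,1) is not negligible. -/
import Mathlib


open Set

/-- Non-flabbiness of the Colombeau sheaf: no net of smooth functions on ℝ
which is bounded by `ε^{-N}` on `[0,1]` can coincide, modulo a negligible net,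
with `ε^{-1/x}` on `(0,1)`. -/
theorem colombeau_not_flabby (g : ℝ → ℝ → ℝ)
    (hgsm : ∀ ε ∈ Set.Ioo (0 : ℝ) 1, ContDiff ℝ (⊤ : ℕ∞) (g ε))
    (N : ℕ) (hN : ∃ C > 0, ∃ ε₀ > 0, ∀ ε ∈ Set.Ioo (0 : ℝ) ε₀, ∀ x ∈ Set.Icc (0 : ℝ) 1,
      |g ε x| ≤ C * ε ^ (-(N : ℝ))) :
    ¬ (∀ K : Set ℝ, K ⊆ Set.Ioo (0 : ℝ) 1 → IsCompact K → ∀ b : ℝ,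
        ∃ C > 0, ∃ ε₀ > 0, ∀ ε ∈ Set.Ioo (0 : ℝ) ε₀, ∀ x ∈ K,
          |g ε x - Real.exp (-(1 / x) * Real.log ε)| ≤ C * ε ^ b) := by
  intro hneg
  set x0 : ℝ := 1 / ((N : ℝ) + 2) with hx0
  have hNpos : (0 : ℝ) < (N : ℝ) + 2 := by positivity
  have hx0pos : 0 < x0 := by positivity
  have hx0lt : x0 < 1 := by
    rw [hx0, div_lt_one hNpos]
    have : (0:ℝ) ≤ (N : ℝ) := Nat.cast_nonneg N
    linarith
  have hsub : ({x0} : Set ℝ) ⊆ Set.Ioo (0:ℝ) 1 := by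
    intro y hy
    rw [Set.mem_singleton_iff] at hy
    subst hy
    exact ⟨hx0pos, hx0lt⟩
  obtain ⟨C, hC, ε₀, hε₀, hne⟩ := hneg {x0} hsub isCompact_singleton (-((N : ℝ) + 1))
  obtain ⟨C', hC', ε₁, hε₁, hmod⟩ := hN
  set ε : ℝ := min (min ε₀ ε₁) (min 1 (1 / (2 * (C + C')))) / 2 with hε
  have hm : 0 < min (min ε₀ ε₁) (min 1 (1 / (2 * (C + C')))) := by
    refine lt_min (lt_min hε₀ hε₁) (lt_min one_pos ?_)
    positivity
  have hεpos : 0 < ε := by positivity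
  have hεlt : ε < min (min ε₀ ε₁) (min 1 (1 / (2 * (C + C')))) := by
    rw [hε]; linarith
  have hεε₀ : ε < ε₀ := lt_of_lt_of_le hεlt (le_trans (min_le_left _ _) (min_le_left _ _))
  have hεε₁ : ε < ε₁ := lt_of_lt_of_le hεlt (le_trans (min_le_left _ _) (min_le_right _ _))
  have hεle1 : ε ≤ 1 := le_of_lt (lt_of_lt_of_le hεlt (le_trans (min_le_right _ _) (min_le_left _ _)))
  have hεleC : ε ≤ 1 / (2 * (C + C')) :=
    le_of_lt (lt_of_lt_of_le hεlt (le_trans (min_le_right _ _) (min_le_right _ _)))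
  have h1 := hne ε ⟨hεpos, hεε₀⟩ x0 rfl
  have h2 := hmod ε ⟨hεpos, hεε₁⟩ x0 ⟨le_of_lt hx0pos, le_of_lt hx0lt⟩
  have hexp : Real.exp (-(1 / x0) * Real.log ε) = ε ^ (-((N : ℝ) + 2)) := by
    rw [Real.rpow_def_of_pos hεpos]
    congr 1
    rw [hx0, one_div_one_div]
    ring
  rw [hexp] at h1
  -- triangle inequality
  have hpow : (0:ℝ) < ε ^ (-((N : ℝ) + 2)) := Real.rpow_pos_of_pos hεpos _
  have key : ε ^ (-((N : ℝ) + 2)) ≤ C' * ε ^ (-(N : ℝ)) + C * ε ^ (-((N : ℝ) + 1)) := by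
    have ha : ε ^ (-((N : ℝ) + 2)) - g ε x0 ≤ |g ε x0 - ε ^ (-((N : ℝ) + 2))| := by
      rw [abs_sub_comm]
      exact le_trans (le_abs_self _) (le_refl _)
    have hb : g ε x0 ≤ |g ε x0| := le_abs_self _
    linarith
  have hp2 : 0 < ε ^ ((N : ℝ) + 2) := Real.rpow_pos_of_pos hεpos _
  have hmul := mul_le_mul_of_nonneg_right key hp2.le
  have e1 : ε ^ (-((N : ℝ) + 2)) * ε ^ ((N : ℝ) + 2) = 1 := by
    rw [← Real.rpow_add hεpos, show -((N : ℝ) + 2) + ((N : ℝ) + 2) = 0 by ring, Real.rpow_zero]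
  have e2 : ε ^ (-(N : ℝ)) * ε ^ ((N : ℝ) + 2) = ε ^ (2:ℝ) := by
    rw [← Real.rpow_add hεpos, show -(N : ℝ) + ((N : ℝ) + 2) = 2 by ring]
  have e3 : ε ^ (-((N : ℝ) + 1)) * ε ^ ((N : ℝ) + 2) = ε := by
    rw [← Real.rpow_add hεpos]
    have : -((N : ℝ) + 1) + ((N : ℝ) + 2) = 1 := by ring
    rw [this, Real.rpow_one]
  rw [e1, add_mul, mul_assoc, mul_assoc, e2, e3] at hmul
  have hε2 : ε ^ (2:ℝ) ≤ ε := by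
    have := Real.rpow_le_rpow_of_exponent_ge hεpos hεle1 (by norm_num : (1:ℝ) ≤ 2)
    rwa [Real.rpow_one] at this
  have hfin : (C + C') * ε ≤ 1 / 2 := by
    have h2CC : (0:ℝ) < 2 * (C + C') := by linarith
    have := (le_div_iff₀ h2CC).mp hεleC
    linarith
  nlinarith [mul_le_mul_of_nonneg_left hε2 hC'.le]
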